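/- Let a, b, c ∈ ℂ with c not a nonpositive integer. Then there is an open neighborhood U of 0 in ℂ such that the function g(x) = ₂F₁(a, b; c; 4x(1-x)) satisfies Heun's differential equation with parameters (t, q; a', b'; c'; d') = (1/2, 2ab; 2a, 2b; c; c) at every x ∈ U with x ∉ {0, 1, 1/2}. -/

import Mathlib

/-!
On the unit disc `₂F₁(a, b; c; z)` is the sum of its power series, and the coefficient recurrence
`(n + 1)(n + c) β (n + 1) = (n + a)(n + b) β n` makes it solve the hypergeometric equation
`z(1 - z) F'' + (c - (a + b + 1) z) F' - a b F = 0`. Heun's equation with parameters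
`(1/2, 2ab; 2a, 2b; c; c)` is the pullback of this equation along `z = 4x(1 - x)`: since
`1 - z = (1 - 2x)²`, the chain rule turns the Heun expression of `F ∘ z` at `x` into
`-4 / (x(x - 1))` times the hypergeometric expression of `F` at `z`.
-/

open Complex

/-- `g` satisfies Heun's differential equation with parameters `(t, q; a, b; c; d)`
at the point `x`: `g` is twice complex differentiable at `x` and
`g''(x) + (c/x + d/(x-1) + (a+b-c-d+1)/(x-t)) g'(x) + ((a b x - q)/(x(x-1)(x-t))) g(x) = 0`. -/
def SatisfiesHeunAt (t q a b c d : ℂ) (g : ℂ → ℂ) (x : ℂ) : Prop :=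
  DifferentiableAt ℂ g x ∧ DifferentiableAt ℂ (deriv g) x ∧
    deriv (deriv g) x +
      (c / x + d / (x - 1) + (a + b - c - d + 1) / (x - t)) * deriv g x +
      ((a * b * x - q) / (x * (x - 1) * (x - t))) * g x = 0

open FormalMultilinearSeries Filter Topology

section PowerSeries

variable {𝕜 : Type*} [NontriviallyNormedField 𝕜]

theorem HasFPowerSeriesOnBall.deriv_ofScalars [CompleteSpace 𝕜] {f : 𝕜 → 𝕜} {c : ℕ → 𝕜}
    {x : 𝕜} {r : ENNReal} (h : HasFPowerSeriesOnBall f (ofScalars 𝕜 c) x r) :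
    HasFPowerSeriesOnBall (deriv f) (ofScalars 𝕜 fun n => (n + 1) * c (n + 1)) x r := by
  convert! (ContinuousLinearMap.apply 𝕜 𝕜 (1 : 𝕜)).comp_hasFPowerSeriesOnBall h.fderiv
  ext n
  simp

theorem HasFPowerSeriesOnBall.hasSum_ofScalars {f : 𝕜 → 𝕜} {c : ℕ → 𝕜} {r : ENNReal}
    (h : HasFPowerSeriesOnBall f (ofScalars 𝕜 c) 0 r) {z : 𝕜} (hz : z ∈ Metric.eball 0 r) :
    HasSum (fun n => c n * z ^ n) (f z) := by
  simpa [ofScalars_apply_eq, smul_eq_mul, mul_comm] using h.hasSum hz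

theorem HasSum.mul_pow_of_hasSum_succ {u : ℕ → 𝕜} {z S : 𝕜}
    (h : HasSum (fun n => u (n + 1) * z ^ n) S) :
    HasSum (fun n => u n * z ^ n) (u 0 + z * S) := by
  refine (hasSum_nat_add_iff' 1).mp ?_
  rw [Finset.sum_range_one, pow_zero, mul_one, add_sub_cancel_left]
  exact (h.mul_left z).congr_fun fun n => by ring

end PowerSeries

section Hypergeometric

variable {𝕂 : Type*} [RCLike 𝕂] {a b c : 𝕂}

theorem ordinaryHypergeometricCoefficient_succ (hc : ∀ n : ℕ, c ≠ -n) (n : ℕ) :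
    (n + 1) * (n + c) * ordinaryHypergeometricCoefficient a b c (n + 1) =
      (n + a) * (n + b) * ordinaryHypergeometricCoefficient a b c n := by
  have hcn : c + n ≠ 0 := fun h => hc n (by linear_combination h)
  have hpoch : (ascPochhammer 𝕂 n).eval c ≠ 0 := by
    simpa [ascPochhammer_eval_eq_zero_iff, eq_neg_iff_add_eq_zero, add_comm] using
      fun k _ => hc k
  simp only [ordinaryHypergeometricCoefficient, ascPochhammer_succ_eval, Nat.factorial_succ]
  push_cast
  field_simp
  ring

theorem one_le_radius_ordinaryHypergeometricSeries (hc : ∀ n : ℕ, c ≠ -n) :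
    1 ≤ (ordinaryHypergeometricSeries 𝕂 a b c).radius := by
  by_cases h : ∀ k : ℕ, (k : 𝕂) ≠ -a ∧ (k : 𝕂) ≠ -b ∧ (k : 𝕂) ≠ -c
  · rw [ordinaryHypergeometricSeries_radius_eq_one 𝕂 a b c h]
  push Not at h
  obtain ⟨k, hk⟩ := h
  by_cases ha : (k : 𝕂) = -a
  · rw [show a = -k by rw [ha, neg_neg], ordinaryHypergeometric_radius_top_of_neg_nat₁]
    exact le_top
  by_cases hb : (k : 𝕂) = -b
  · rw [show b = -k by rw [hb, neg_neg], ordinaryHypergeometric_radius_top_of_neg_nat₂]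
    exact le_top
  exact absurd (by rw [hk ha hb, neg_neg]) (hc k)

theorem hasFPowerSeriesOnBall_ordinaryHypergeometric (hc : ∀ n : ℕ, c ≠ -n) :
    HasFPowerSeriesOnBall (ordinaryHypergeometric a b c)
      (ordinaryHypergeometricSeries 𝕂 a b c) 0 1 :=
  ((ordinaryHypergeometricSeries 𝕂 a b c).hasFPowerSeriesOnBall
    (zero_lt_one.trans_le (one_le_radius_ordinaryHypergeometricSeries hc))).mono zero_lt_one
    (one_le_radius_ordinaryHypergeometricSeries hc)

theorem ordinaryHypergeometric_ode (hc : ∀ n : ℕ, c ≠ -n) {z : 𝕂} (hz : z ∈ Metric.eball 0 1) :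
    z * (1 - z) * deriv (deriv (ordinaryHypergeometric a b c)) z
      + (c - (a + b + 1) * z) * deriv (ordinaryHypergeometric a b c) z
      - a * b * ordinaryHypergeometric a b c z = 0 := by
  set β := ordinaryHypergeometricCoefficient a b c
  have hF : HasFPowerSeriesOnBall (ordinaryHypergeometric a b c) (ofScalars 𝕂 β) 0 1 :=
    hasFPowerSeriesOnBall_ordinaryHypergeometric hc
  have hF' := hF.deriv_ofScalars
  have S0 := hF.hasSum_ofScalars hz
  have S1 := hF'.hasSum_ofScalars hz
  have S2 := hF'.deriv_ofScalars.hasSum_ofScalars hz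
  have zS1 : HasSum (fun n : ℕ => n * β n * z ^ n) (z * deriv (₂F₁ a b c) z) := by
    simpa using HasSum.mul_pow_of_hasSum_succ (u := fun n : ℕ => n * β n)
      (S1.congr_fun fun n => by push_cast; ring)
  have zS2 : HasSum (fun n : ℕ => n * (n + 1) * β (n + 1) * z ^ n)
      (z * deriv (deriv (₂F₁ a b c)) z) := by
    simpa using HasSum.mul_pow_of_hasSum_succ (u := fun n : ℕ => n * (n + 1) * β (n + 1))
      (S2.congr_fun fun n => by push_cast; ring)
  have zzS2 : HasSum (fun n : ℕ => n * (n - 1) * β n * z ^ n)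
      (z * (z * deriv (deriv (₂F₁ a b c)) z)) := by
    simpa using HasSum.mul_pow_of_hasSum_succ (u := fun n : ℕ => n * (n - 1) * β n)
      (zS2.congr_fun fun n => by push_cast; ring)
  have hode := (((zS2.sub zzS2).add (S1.mul_left c)).sub (zS1.mul_left (a + b + 1))).sub
    (S0.mul_left (a * b))
  have hzero := hode.unique (hasSum_zero.congr_fun fun n => by
    linear_combination z ^ n * ordinaryHypergeometricCoefficient_succ (a := a) (b := b) hc n)
  linear_combination hzero

end Hypergeometric

section Composition

variable {𝕜 : Type*} [NontriviallyNormedField 𝕜]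

theorem hasDerivAt_deriv_comp {f φ φ' : 𝕜 → 𝕜} {φ'' x : 𝕜}
    (hf : ∀ᶠ y in 𝓝 x, DifferentiableAt 𝕜 f (φ y)) (hf' : DifferentiableAt 𝕜 (deriv f) (φ x))
    (hφ : ∀ᶠ y in 𝓝 x, HasDerivAt φ (φ' y) y) (hφ' : HasDerivAt φ' φ'' x) :
    HasDerivAt (deriv (f ∘ φ))
      (deriv (deriv f) (φ x) * φ' x * φ' x + deriv f (φ x) * φ'') x := by
  have hderiv : deriv (f ∘ φ) =ᶠ[𝓝 x] fun y => deriv f (φ y) * φ' y :=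
    (hf.and hφ).mono fun y h => (h.1.hasDerivAt.comp y h.2).deriv
  exact ((hf'.hasDerivAt.comp x hφ.self_of_nhds).mul hφ').congr_of_eventuallyEq hderiv

end Composition

theorem satisfiesHeunAt_comp_four_mul_mul_one_sub {F : ℂ → ℂ} {a b c x : ℂ}
    (hx0 : x ≠ 0) (hx1 : x ≠ 1) (hx2 : x ≠ 1 / 2)
    (hF : ∀ᶠ y in 𝓝 x, DifferentiableAt ℂ F (4 * y * (1 - y)))
    (hF' : DifferentiableAt ℂ (deriv F) (4 * x * (1 - x)))
    (hode : let z := 4 * x * (1 - x)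
      z * (1 - z) * deriv (deriv F) z + (c - (a + b + 1) * z) * deriv F z - a * b * F z = 0) :
    SatisfiesHeunAt (1 / 2) (2 * a * b) (2 * a) (2 * b) c c (fun y => F (4 * y * (1 - y))) x := by
  change SatisfiesHeunAt _ _ _ _ _ _ (F ∘ fun y => 4 * y * (1 - y)) x
  have hφ (y : ℂ) : HasDerivAt (fun y => 4 * y * (1 - y)) (4 - 8 * y) y :=
    (((hasDerivAt_id' y).const_mul 4).fun_mul ((hasDerivAt_id' y).const_sub 1)).congr_deriv
      (by ring)
  have hφ' : HasDerivAt (fun y : ℂ => 4 - 8 * y) (-8) x := by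
    simpa using ((hasDerivAt_id x).const_mul 8).const_sub 4
  have hg' := hF.self_of_nhds.hasDerivAt.comp x (hφ x)
  have hg'' := hasDerivAt_deriv_comp hF hF' (.of_forall hφ) hφ'
  refine ⟨hg'.differentiableAt, hg''.differentiableAt, ?_⟩
  rw [hg''.deriv, hg'.deriv, Function.comp_apply]
  have h2 : x * 2 - 1 ≠ 0 := fun h => hx2 (by linear_combination h / 2)
  field_simp
  linear_combination (-4 * (2 * x - 1)) * hode

theorem stmt6 (a b c : ℂ) (hc : ∀ n : ℕ, c ≠ -(n : ℂ)) :
    ∃ U : Set ℂ, IsOpen U ∧ (0 : ℂ) ∈ U ∧ ∀ x ∈ U, x ≠ (0 : ℂ) → x ≠ (1 : ℂ) → x ≠ (1/2 : ℂ) →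
      SatisfiesHeunAt (1/2) (2*a*b) (2*a) (2*b) (c) (c)
        (fun x : ℂ => ordinaryHypergeometric a b c (4*x*(1-x))) x := by
  have hU : IsOpen ((fun x : ℂ => 4 * x * (1 - x)) ⁻¹' Metric.eball 0 1) :=
    Metric.isOpen_eball.preimage (by fun_prop)
  have hF : ∀ z ∈ Metric.eball (0 : ℂ) 1, AnalyticAt ℂ (ordinaryHypergeometric a b c) z :=
    fun z hz => (hasFPowerSeriesOnBall_ordinaryHypergeometric hc).analyticAt_of_mem hz
  refine ⟨_, hU, by simp, fun x hx hx0 hx1 hx2 => ?_⟩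
  exact satisfiesHeunAt_comp_four_mul_mul_one_sub hx0 hx1 hx2
    ((hU.eventually_mem hx).mono fun y hy => (hF _ hy).differentiableAt)
    (hF _ hx).deriv.differentiableAt (ordinaryHypergeometric_ode hc hx)
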